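/- arXiv:1111.0643 — 4 statements merged into one kernel-verified Lean document; each statement's English description precedes it below -/
import Mathlib

section
/- Let L > 0. The function s \mapsto (L/\pi)^{2s} \cdot \zeta(2s) of a complex variable is complex differentiable at s = 0, and its derivative at s = 0 equals -\log 2 - \log L. Consequently the zeta-regularized spectral determinant exp(-\zeta_{Dir}'(0)) of the Dirichlet Laplacian on [0,L] equals 2L. -/
/-!
Using `ζ(0) = -1/2` and `ζ'(0) = -log(2π)/2`, the product and chain rules give the derivative
`2 log a · ζ(0) + 2 ζ'(0) = -log(2πa)` of `s ↦ a^{2s} ζ(2s)` at `0`; for `a = L/π` this is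
`-log(2L)`.
-/

open Complex

lemma hasDerivAt_riemannZeta_zero :
    HasDerivAt riemannZeta (-log (2 * Real.pi) / 2) 0 :=
  deriv_riemannZeta_zero ▸ (differentiableAt_riemannZeta zero_ne_one).hasDerivAt

lemma hasDerivAt_cpow_two_mul_mul_riemannZeta_two_mul_zero {a : ℝ} (ha : 0 < a) :
    HasDerivAt (fun s : ℂ => (a : ℂ) ^ (2 * s) * riemannZeta (2 * s))
      ((-Real.log (2 * Real.pi * a) : ℝ) : ℂ) 0 := by
  have hlin : HasDerivAt (fun s : ℂ => 2 * s) 2 0 := by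
    simpa using (hasDerivAt_id (0 : ℂ)).const_mul 2
  have hpow := hlin.const_cpow (c := (a : ℂ)) (Or.inl (ofReal_ne_zero.mpr ha.ne'))
  have hzeta := hasDerivAt_riemannZeta_zero.comp_of_eq 0 hlin (mul_zero 2).symm
  refine (hpow.mul hzeta).congr_deriv ?_
  rw [Function.comp_apply, mul_zero, cpow_zero, riemannZeta_zero, ← ofReal_log ha.le,
    show 2 * (Real.pi : ℂ) = ((2 * Real.pi : ℝ) : ℂ) by push_cast; rfl,
    ← ofReal_log (by positivity), Real.log_mul (by positivity) ha.ne']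
  push_cast
  ring

/-- For `L > 0`, the analytic continuation `s ↦ (L/π)^{2s} ζ(2s)` of the Dirichlet
spectral zeta function on `[0,L]` is differentiable at `s = 0` with derivative
`-log 2 - log L`; consequently the zeta-regularized determinant
`exp(-ζ_Dir'(0))` equals `2L`. -/
theorem stmt_1 (L : ℝ) (hL : 0 < L) :
    HasDerivAt (fun s : ℂ => ((L / Real.pi : ℝ) : ℂ) ^ (2 * s) * riemannZeta (2 * s))
      ((-Real.log 2 - Real.log L : ℝ) : ℂ) 0 ∧
    Complex.exp (-((-Real.log 2 - Real.log L : ℝ) : ℂ)) = ((2 * L : ℝ) : ℂ) := by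
  have h2L : 2 * Real.pi * (L / Real.pi) = 2 * L := by field_simp
  have hlog : -Real.log 2 - Real.log L = -Real.log (2 * Real.pi * (L / Real.pi)) := by
    rw [h2L, Real.log_mul two_ne_zero hL.ne']
    ring
  refine ⟨hlog ▸
    hasDerivAt_cpow_two_mul_mul_riemannZeta_two_mul_zero (div_pos hL Real.pi_pos), ?_⟩
  rw [← ofReal_neg, ← ofReal_exp, hlog, neg_neg, Real.exp_log (by positivity), h2L]
end

section
/- Let L > 0 and let \phi : \mathbb{R} \to \mathbb{R} be continuously differentiable. Let u : \mathbb{R} \to \mathbb{R} be twice continuously differentiable with u''(x) = (\phi(x)^2 + \phi'(x))\,u(x) for all x \in [0,L], u(0) = 0 and u'(0) = 1. Then u(L) = \exp(\int_0^L \phi(x)\,dx) \cdot \int_0^L \exp(-2\int_0^x \phi(y)\,dy)\,dx. -/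
/-!
The operator factorizes as `-d²/dx² + φ² + φ' = -(d/dx + φ)(d/dx - φ)`. Hence `w = u' - φu` solves the
first-order equation `w' = -φw`, so `w = w(0) e^{-Φ}` with `Φ = ∫₀ˣ φ`. Then
`(e^{-Φ} u)' = e^{-Φ} w = w(0) e^{-2Φ}`, and integrating over `[0, L]` gives the formula.
-/

open Real Set intervalIntegral

theorem hasDerivAt_deriv_sub_mul {φ u : ℝ → ℝ} {x : ℝ} (hφ : DifferentiableAt ℝ φ x)
    (hu : DifferentiableAt ℝ u x) (hu' : DifferentiableAt ℝ (deriv u) x)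
    (hode : deriv (deriv u) x = (φ x ^ 2 + deriv φ x) * u x) :
    HasDerivAt (fun y => deriv u y - φ y * u y) (-(φ x * (deriv u x - φ x * u x))) x := by
  refine (hu'.hasDerivAt.sub (hφ.hasDerivAt.mul hu.hasDerivAt)).congr_deriv ?_
  rw [hode]
  ring

theorem eq_mul_exp_neg_integral_of_hasDerivAt {φ w : ℝ → ℝ} {a b : ℝ} (hφ : Continuous φ)
    (hw : ∀ x ∈ Icc a b, HasDerivAt w (-(φ x * w x)) x) :
    ∀ x ∈ Icc a b, w x = w a * exp (-∫ t in a..x, φ t) := by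
  set Φ : ℝ → ℝ := fun x => ∫ t in a..x, φ t
  have hΦ (x : ℝ) : HasDerivAt Φ (φ x) x := (hφ.integral_hasStrictDerivAt a x).hasDerivAt
  have hconst (x : ℝ) (hx : x ∈ Icc a b) : HasDerivAt (fun y => w y * exp (Φ y)) 0 x := by
    refine ((hw x hx).mul (hΦ x).exp).congr_deriv ?_
    ring
  have key := constant_of_has_deriv_right_zero
    (fun x hx => (hconst x hx).continuousAt.continuousWithinAt)
    (fun x hx => (hconst x (Ico_subset_Icc_self hx)).hasDerivWithinAt)
  intro x hx
  have hx' : w x * exp (Φ x) = w a := by simpa [Φ] using key x hx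
  rw [← hx', mul_assoc, ← exp_add, add_neg_cancel, exp_zero, mul_one]

theorem eq_exp_integral_mul_of_deriv_deriv_eq {φ u : ℝ → ℝ} {a b : ℝ} (hab : a ≤ b)
    (hφ : Differentiable ℝ φ) (hu : Differentiable ℝ u) (hu' : Differentiable ℝ (deriv u))
    (hode : ∀ x ∈ Icc a b, deriv (deriv u) x = (φ x ^ 2 + deriv φ x) * u x) :
    u b = exp (∫ x in a..b, φ x) *
      (u a + (deriv u a - φ a * u a) * ∫ x in a..b, exp (-2 * ∫ y in a..x, φ y)) := by
  set Φ : ℝ → ℝ := fun x => ∫ t in a..x, φ t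
  set w : ℝ → ℝ := fun x => deriv u x - φ x * u x
  have hΦ (x : ℝ) : HasDerivAt Φ (φ x) x :=
    (hφ.continuous.integral_hasStrictDerivAt a x).hasDerivAt
  have hw : ∀ x ∈ Icc a b, w x = w a * exp (-Φ x) :=
    eq_mul_exp_neg_integral_of_hasDerivAt hφ.continuous fun x hx =>
      hasDerivAt_deriv_sub_mul (hφ x) (hu x) (hu' x) (hode x hx)
  have hg : ∀ x ∈ uIcc a b, HasDerivAt (fun y => exp (-Φ y) * u y) (w a * exp (-2 * Φ x)) x := by
    intro x hx
    rw [uIcc_of_le hab] at hx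
    refine (((hΦ x).neg.exp).mul (hu x).hasDerivAt).congr_deriv ?_
    have hsq : exp (-2 * Φ x) = exp (-Φ x) * exp (-Φ x) := by rw [← exp_add]; ring_nf
    have hwx : deriv u x - φ x * u x = w a * exp (-Φ x) := hw x hx
    rw [hsq]
    linear_combination exp (-Φ x) * hwx
  have hint : Continuous fun x => w a * exp (-2 * Φ x) := by
    have : Continuous Φ := continuous_iff_continuousAt.2 fun x => (hΦ x).continuousAt
    fun_prop
  have hftc := integral_eq_sub_of_hasDerivAt hg (hint.intervalIntegrable a b)
  rw [intervalIntegral.integral_const_mul] at hftc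
  have hΦa : Φ a = 0 := integral_same
  simp only [hΦa, neg_zero, exp_zero, one_mul] at hftc
  have hexp : exp (Φ b) * exp (-Φ b) = 1 := by rw [← exp_add, add_neg_cancel, exp_zero]
  linear_combination (-exp (Φ b)) * hftc - u b * hexp

/-- For a C¹ superpotential `φ`, the solution `u` of
`u'' = (φ² + φ') u` on `[0, L]` with `u(0) = 0`, `u'(0) = 1` satisfies
`u(L) = e^{∫₀ᴸ φ} ∫₀ᴸ e^{-2∫₀ˣ φ} dx`, encoding the formula
`det(-d²/dx² + φ² + φ') = 2 e^{∫₀ᴸ φ} ∫₀ᴸ e^{-2∫₀ˣ φ} dx`. -/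
theorem stmt_12 (L : ℝ) (hL : 0 < L) (φ : ℝ → ℝ) (hφ : ContDiff ℝ 1 φ)
    (u : ℝ → ℝ) (hu : ContDiff ℝ 2 u)
    (hode : ∀ x ∈ Set.Icc 0 L, deriv (deriv u) x = (φ x ^ 2 + deriv φ x) * u x)
    (hu0 : u 0 = 0) (hu0' : deriv u 0 = 1) :
    u L = Real.exp (∫ x in (0:ℝ)..L, φ x) *
      ∫ x in (0:ℝ)..L, Real.exp (-2 * ∫ y in (0:ℝ)..x, φ y) := by
  simpa [hu0, hu0'] using eq_exp_integral_mul_of_deriv_deriv_eq hL.le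
    (hφ.differentiable one_ne_zero) (hu.differentiable two_ne_zero) hu.differentiable_deriv_two hode
end

section
/- Let L > 0 and \omega > 0 be real numbers, and let u : \mathbb{R} \to \mathbb{R} be twice continuously differentiable with u''(x) = (\omega^2 x^2 + \omega)\,u(x) for all x \in [0,L], u(0) = 0 and u'(0) = 1. Then u(L) = e^{\omega L^2/2} \int_0^L e^{-\omega y^2}\,dy. -/
/-!
The operator `-d²/dx² + φ² + φ'` factors as `A†A` with `A = d/dx - φ`. Hence if `u` solves
`u'' = (φ² + φ')u`, then `v = u' - φu` solves the first-order equation `v' = -φv`, so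
`v = e^{Φ(a) - Φ}` for an antiderivative `Φ` of `φ` when `u(a) = 0`, `u'(a) = 1`. Then
`(u e^{Φ(b) - Φ})' = v e^{Φ(b) - Φ} = e^{Φ(a) + Φ(b) - 2Φ}`, and integrating over `[a, b]` gives `u(b)`.
For the harmonic oscillator `φ(x) = ωx`, `Φ(x) = ωx²/2`.
-/

open Set Real

section Superpotential

variable {φ Φ dφ u u' v : ℝ → ℝ} {a b x : ℝ}

theorem hasDerivAt_sub_mul_of_hasDerivAt_eq_sq_add_mul (hu : HasDerivAt u (u' x) x)
    (hu' : HasDerivAt u' ((φ x ^ 2 + dφ x) * u x) x) (hφ : HasDerivAt φ (dφ x) x) :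
    HasDerivAt (fun y ↦ u' y - φ y * u y) (-φ x * (u' x - φ x * u x)) x :=
  (hu'.sub (hφ.mul hu)).congr_deriv (by ring)

theorem mul_exp_eq_of_hasDerivAt_neg_mul
    (hv : ∀ x ∈ Icc a b, HasDerivAt v (-φ x * v x) x)
    (hΦ : ∀ x ∈ Icc a b, HasDerivAt Φ (φ x) x) :
    ∀ x ∈ Icc a b, v x * exp (Φ x) = v a * exp (Φ a) := by
  have hderiv : ∀ x ∈ Icc a b, HasDerivAt (fun y ↦ v y * exp (Φ y)) 0 x := fun x hx ↦
    ((hv x hx).mul (hΦ x hx).exp).congr_deriv (by ring)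
  exact constant_of_has_deriv_right_zero
    (fun x hx ↦ (hderiv x hx).continuousAt.continuousWithinAt)
    (fun x hx ↦ (hderiv x (Ico_subset_Icc_self hx)).hasDerivWithinAt)

theorem hasDerivAt_mul_exp_sub (c : ℝ) (hu : HasDerivAt u (u' x) x) (hΦ : HasDerivAt Φ (φ x) x) :
    HasDerivAt (fun y ↦ u y * exp (c - Φ y)) ((u' x - φ x * u x) * exp (c - Φ x)) x :=
  (hu.mul (hΦ.const_sub c).exp).congr_deriv (by ring)

theorem eq_integral_exp_of_hasDerivAt_eq_sq_add_mul (hab : a ≤ b)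
    (hu : ∀ x ∈ Icc a b, HasDerivAt u (u' x) x)
    (hu' : ∀ x ∈ Icc a b, HasDerivAt u' ((φ x ^ 2 + dφ x) * u x) x)
    (hφ : ∀ x ∈ Icc a b, HasDerivAt φ (dφ x) x)
    (hΦ : ∀ x ∈ Icc a b, HasDerivAt Φ (φ x) x)
    (hua : u a = 0) (hua' : u' a = 1) :
    u b = ∫ y in a..b, exp (Φ a + Φ b - 2 * Φ y) := by
  have hv : ∀ x ∈ Icc a b, u' x - φ x * u x = exp (Φ a - Φ x) := fun x hx ↦ by
    have := mul_exp_eq_of_hasDerivAt_neg_mul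
      (fun y hy ↦ hasDerivAt_sub_mul_of_hasDerivAt_eq_sq_add_mul (hu y hy) (hu' y hy) (hφ y hy))
      hΦ x hx
    rw [hua, hua', mul_zero, sub_zero, one_mul] at this
    rw [exp_sub, eq_div_iff (exp_pos _).ne', this]
  have hF : ∀ x ∈ uIcc a b,
      HasDerivAt (fun y ↦ u y * exp (Φ b - Φ y)) (exp (Φ a + Φ b - 2 * Φ x)) x := fun x hx ↦ by
    rw [uIcc_of_le hab] at hx
    refine (hasDerivAt_mul_exp_sub (Φ b) (hu x hx) (hΦ x hx)).congr_deriv ?_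
    rw [hv x hx, ← exp_add]
    ring_nf
  have hcont : ContinuousOn (fun y ↦ exp (Φ a + Φ b - 2 * Φ y)) (uIcc a b) := by
    rw [uIcc_of_le hab]
    exact (continuousOn_const.sub (continuousOn_const.mul
      (fun x hx ↦ (hΦ x hx).continuousAt.continuousWithinAt))).rexp
  rw [intervalIntegral.integral_eq_sub_of_hasDerivAt hF hcont.intervalIntegrable, hua]
  simp

end Superpotential

theorem stmt_14_general (L ω : ℝ) (hL : 0 < L)
    (u : ℝ → ℝ) (hu : ContDiff ℝ 2 u)
    (hode : ∀ x ∈ Set.Icc 0 L, deriv (deriv u) x = (ω ^ 2 * x ^ 2 + ω) * u x)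
    (hu0 : u 0 = 0) (hu0' : deriv u 0 = 1) :
    u L = Real.exp (ω * L ^ 2 / 2) * ∫ y in (0:ℝ)..L, Real.exp (-ω * y ^ 2) := by
  have hu' : ContDiff ℝ 1 (deriv u) := hu.iterate_deriv' 1 1
  have hsol := eq_integral_exp_of_hasDerivAt_eq_sq_add_mul (φ := fun x ↦ ω * x)
    (Φ := fun x ↦ ω * x ^ 2 / 2) (dφ := fun _ ↦ ω) hL.le
    (fun x _ ↦ (hu.differentiable (by norm_num) x).hasDerivAt)
    (fun x hx ↦ by
      rw [mul_pow, ← hode x hx]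
      exact (hu'.differentiable one_ne_zero x).hasDerivAt)
    (fun x _ ↦ ((hasDerivAt_id x).const_mul ω).congr_deriv (mul_one ω))
    (fun x _ ↦ (((hasDerivAt_pow 2 x).const_mul ω).div_const 2).congr_deriv (by ring))
    hu0 hu0'
  rw [hsol, ← intervalIntegral.integral_const_mul]
  congr 1 with y
  rw [← exp_add]
  ring_nf

/-- For the harmonic oscillator on a finite interval (supersymmetric Hamiltonian
with superpotential `φ(x) = ωx`): if `u'' = (ω²x² + ω)u` on `[0, L]` with
`u(0) = 0`, `u'(0) = 1`, then `u(L) = e^{ωL²/2} ∫₀ᴸ e^{-ωy²} dy`. -/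
theorem stmt_14 (L ω : ℝ) (hL : 0 < L) (hω : 0 < ω)
    (u : ℝ → ℝ) (hu : ContDiff ℝ 2 u)
    (hode : ∀ x ∈ Set.Icc 0 L, deriv (deriv u) x = (ω ^ 2 * x ^ 2 + ω) * u x)
    (hu0 : u 0 = 0) (hu0' : deriv u 0 = 1) :
    u L = Real.exp (ω * L ^ 2 / 2) * ∫ y in (0:ℝ)..L, Real.exp (-ω * y ^ 2) :=
  stmt_14_general L ω hL u hu hode hu0 hu0'
end

section
/- Let L > 0 and let V : \mathbb{R} \to \mathbb{R} be infinitely differentiable. Then there exists T > 0 such that for every t \geq T the boundary value problem f''(x) = (V(x) + t^2)\,f(x) on [0,L] with f(0) = 1, f(L) = 0 has a unique twice continuously differentiable solution f_t, and e^{tL}\,f_t'(L)/t \to -2 as t \to \infty; in particular f_t'(L) vanishes exponentially fast as t \to \infty. -/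
open Filter

namespace Stmt19

open Set Metric Topology

/-- the vector field of the first-order system `(u, u')' = (u', Q u)` -/
def vf (Q : ℝ → ℝ) : ℝ → ℝ × ℝ → ℝ × ℝ := fun x p => (p.2, Q x * p.1)

lemma vf_lip {Q : ℝ → ℝ} {K : ℝ} (hK : 1 ≤ K) (hQ : ∀ x, |Q x| ≤ K) (x : ℝ) :
    LipschitzWith (Real.toNNReal K) (vf Q x) := by
  apply LipschitzWith.of_dist_le' (K := K)
  intro p q
  rw [Prod.dist_eq]
  simp only [vf, Prod.dist_eq, Real.dist_eq]
  have h1 : |p.2 - q.2| ≤ K * max |p.1 - q.1| |p.2 - q.2| := by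
    calc |p.2 - q.2| ≤ max |p.1 - q.1| |p.2 - q.2| := le_max_right _ _
    _ ≤ K * max |p.1 - q.1| |p.2 - q.2| := by nlinarith [abs_nonneg (p.1 - q.1), abs_nonneg (p.2 - q.2), le_max_left |p.1 - q.1| |p.2 - q.2|]
  have h2 : |Q x * p.1 - Q x * q.1| ≤ K * max |p.1 - q.1| |p.2 - q.2| := by
    rw [← mul_sub, abs_mul]
    calc |Q x| * |p.1 - q.1| ≤ K * |p.1 - q.1| :=
      mul_le_mul_of_nonneg_right (hQ x) (abs_nonneg _)
    _ ≤ K * max |p.1 - q.1| |p.2 - q.2| :=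
      mul_le_mul_of_nonneg_left (le_max_left _ _) (by linarith)
  exact max_le h1 h2

lemma vf_norm {Q : ℝ → ℝ} {K : ℝ} (hK : 1 ≤ K) (hQ : ∀ x, |Q x| ≤ K) (x : ℝ) (p : ℝ × ℝ) :
    ‖vf Q x p‖ ≤ K * ‖p‖ := by
  have hp : ‖p‖ = max |p.1| |p.2| := rfl
  have : ‖vf Q x p‖ = max |p.2| |Q x * p.1| := rfl
  rw [this, hp]
  apply max_le
  · calc |p.2| ≤ max |p.1| |p.2| := le_max_right _ _
    _ ≤ K * max |p.1| |p.2| := by nlinarith [abs_nonneg p.1, abs_nonneg p.2, le_max_left |p.1| |p.2|]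
  · rw [abs_mul]
    calc |Q x| * |p.1| ≤ K * |p.1| := mul_le_mul_of_nonneg_right (hQ x) (abs_nonneg _)
    _ ≤ K * max |p.1| |p.2| := mul_le_mul_of_nonneg_left (le_max_left _ _) (by linarith)

/-- One Picard–Lindelöf step of uniform length `(2K)⁻¹`. -/
lemma step {Q : ℝ → ℝ} (hQc : Continuous Q) {K : ℝ} (hK : 1 ≤ K) (hQ : ∀ x, |Q x| ≤ K)
    (c : ℝ) (p : ℝ × ℝ) :
    ∃ z : ℝ → ℝ × ℝ, z c = p ∧ ∀ x ∈ Icc c (c + (2*K)⁻¹),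
      HasDerivWithinAt z (vf Q x (z x)) (Icc c (c + (2*K)⁻¹)) x := by
  have hK0 : (0:ℝ) < K := by linarith
  have hδ : (0:ℝ) < (2*K)⁻¹ := by positivity
  have hpl : IsPicardLindelof (vf Q) (tmin := c) (tmax := c + (2*K)⁻¹)
      ⟨c, le_refl _, by linarith⟩ p (⟨‖p‖ + 1, by positivity⟩ : NNReal) 0
      (Real.toNNReal (K * (2 * ‖p‖ + 1))) (Real.toNNReal K) := by
    constructor
    · intro x _
      exact (vf_lip hK hQ x).lipschitzOnWith
    · intro y _
      apply Continuous.continuousOn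
      exact (continuous_const.prodMk (hQc.mul continuous_const))
    · intro x _ y hy
      have hyn : ‖y‖ ≤ ‖p‖ + (‖p‖ + 1) := by
        rw [mem_closedBall, dist_eq_norm] at hy
        calc ‖y‖ = ‖(y - p) + p‖ := by rw [sub_add_cancel]
        _ ≤ ‖y - p‖ + ‖p‖ := norm_add_le _ _
        _ ≤ ‖p‖ + (‖p‖ + 1) := by have hy' : ‖y - p‖ ≤ ‖p‖ + 1 := hy; linarith
      calc ‖vf Q x y‖ ≤ K * ‖y‖ := vf_norm hK hQ x y
      _ ≤ K * (2 * ‖p‖ + 1) := by nlinarith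
      _ ≤ _ := Real.le_coe_toNNReal _
    · have : max (c + (2*K)⁻¹ - c) (c - c) = (2*K)⁻¹ := by
        simp only [sub_self, add_sub_cancel_left]
        rw [max_eq_left hδ.le]
      simp only [NNReal.coe_mul, Real.coe_toNNReal _ (by positivity : (0:ℝ) ≤ K * (2 * ‖p‖ + 1)),
        NNReal.coe_zero, sub_zero, NNReal.coe_mk]
      rw [this]
      have h2 : K * (2 * ‖p‖ + 1) * (2*K)⁻¹ = (2 * ‖p‖ + 1)/2 := by
        field_simp
      rw [h2]
      show _ ≤ ‖p‖ + 1
      linarith [norm_nonneg p]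
  obtain ⟨z, hz0, hz⟩ := hpl.exists_eq_forall_mem_Icc_hasDerivWithinAt₀
  exact ⟨z, hz0, hz⟩

/-- Glue two consecutive solutions. -/
lemma glue {F : ℝ → ℝ × ℝ → ℝ × ℝ} {f g : ℝ → ℝ × ℝ} {a b c : ℝ} (hab : a ≤ b) (hbc : b ≤ c)
    (hf : ∀ x ∈ Icc a b, HasDerivWithinAt f (F x (f x)) (Icc a b) x)
    (hg : ∀ x ∈ Icc b c, HasDerivWithinAt g (F x (g x)) (Icc b c) x)
    (hfg : f b = g b) :
    ∃ h : ℝ → ℝ × ℝ, (∀ x ∈ Icc a b, h x = f x) ∧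
      ∀ x ∈ Icc a c, HasDerivWithinAt h (F x (h x)) (Icc a c) x := by
  classical
  set h : ℝ → ℝ × ℝ := fun x => if x ≤ b then f x else g x with hh
  have hhf : ∀ x ∈ Iic b, h x = f x := fun x hx => by simp [hh, mem_Iic.mp hx]
  have hhg : ∀ x ∈ Ici b, h x = g x := by
    intro x hx
    rcases eq_or_lt_of_le (mem_Ici.mp hx) with h' | h'
    · simp [hh, ← h', hfg]
    · simp [hh, not_le.mpr h']
  refine ⟨h, fun x hx => hhf x hx.2, ?_⟩
  intro x hx
  rcases lt_trichotomy x b with hxb | hxb | hxb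
  · have hx' : x ∈ Icc a b := ⟨hx.1, hxb.le⟩
    have h1 : HasDerivWithinAt h (F x (h x)) (Icc a b) x := by
      have := (hf x hx').congr (fun y hy => hhf y hy.2) (hhf x hx'.2)
      rwa [hhf x hx'.2]
    apply h1.mono_of_mem_nhdsWithin
    apply mem_nhdsWithin.mpr
    exact ⟨Iio b, isOpen_Iio, hxb, fun y hy => ⟨hy.2.1, le_of_lt hy.1⟩⟩
  · subst hxb
    have h1 : HasDerivWithinAt h (F x (h x)) (Icc a x) x := by
      have := (hf x ⟨hx.1, le_refl x⟩).congr (fun y hy => hhf y hy.2)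
        (hhf x (self_mem_Iic : x ∈ Iic x))
      rwa [hhf x (self_mem_Iic : x ∈ Iic x)]
    have h2 : HasDerivWithinAt h (F x (h x)) (Icc x c) x := by
      have hgx : h x = g x := hhg x (self_mem_Ici : x ∈ Ici x)
      have := (hg x ⟨le_refl x, hx.2⟩).congr (fun y hy => hhg y hy.1) hgx
      rwa [hgx]
    have := h1.union h2
    rwa [Icc_union_Icc_eq_Icc hx.1 hx.2] at this
  · have hx' : x ∈ Icc b c := ⟨hxb.le, hx.2⟩
    have h1 : HasDerivWithinAt h (F x (h x)) (Icc b c) x := by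
      have := (hg x hx').congr (fun y hy => hhg y hy.1) (hhg x hx'.1)
      rwa [hhg x hx'.1]
    apply h1.mono_of_mem_nhdsWithin
    apply mem_nhdsWithin.mpr
    exact ⟨Ioi b, isOpen_Ioi, hxb, fun y hy => ⟨le_of_lt hy.1, hy.2.2⟩⟩

/-- Chained solution on `Icc a (a + (n+1) δ)`. -/
lemma chain {Q : ℝ → ℝ} (hQc : Continuous Q) {K : ℝ} (hK : 1 ≤ K) (hQ : ∀ x, |Q x| ≤ K)
    (a : ℝ) (p : ℝ × ℝ) :
    ∀ n : ℕ, ∃ y : ℝ → ℝ × ℝ, y a = p ∧ ∀ x ∈ Icc a (a + (n+1) * (2*K)⁻¹),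
      HasDerivWithinAt y (vf Q x (y x)) (Icc a (a + (n+1) * (2*K)⁻¹)) x := by
  have hδ : (0:ℝ) < (2*K)⁻¹ := by positivity
  intro n
  induction n with
  | zero =>
    obtain ⟨z, hz0, hz⟩ := step hQc hK hQ a p
    exact ⟨z, hz0, by simpa using hz⟩
  | succ n ih =>
    obtain ⟨y, hy0, hy⟩ := ih
    set b := a + (n+1) * (2*K)⁻¹ with hb
    obtain ⟨z, hz0, hz⟩ := step hQc hK hQ b (y b)
    have hab : a ≤ b := by
      rw [hb]; nlinarith [hδ.le, Nat.cast_nonneg (α := ℝ) n]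
    have hbc : b ≤ b + (2*K)⁻¹ := by linarith
    obtain ⟨h, hhf, hode⟩ := glue hab hbc hy hz (by rw [hz0])
    refine ⟨h, ?_, ?_⟩
    · rw [hhf a ⟨le_refl a, hab⟩, hy0]
    · have hend : a + (((n+1:ℕ):ℝ) + 1) * (2 * K)⁻¹ = b + (2*K)⁻¹ := by
        rw [hb]; push_cast; ring
      rw [hend]
      exact hode

/-- Global existence for the linear system on any compact interval. -/
lemma solve {Q : ℝ → ℝ} (hQc : Continuous Q) {K : ℝ} (hK : 1 ≤ K) (hQ : ∀ x, |Q x| ≤ K)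
    (a b : ℝ) (hab : a ≤ b) (p : ℝ × ℝ) :
    ∃ y : ℝ → ℝ × ℝ, y a = p ∧ ∀ x ∈ Icc a b,
      HasDerivWithinAt y (vf Q x (y x)) (Icc a b) x := by
  have hK0 : (0:ℝ) < K := by linarith
  have hδ : (0:ℝ) < (2*K)⁻¹ := by positivity
  obtain ⟨n, hn⟩ := exists_nat_ge ((b - a) * (2*K))
  obtain ⟨y, hy0, hy⟩ := chain hQc hK hQ a p n
  have hB : b ≤ a + ((n:ℝ)+1) * (2*K)⁻¹ := by
    have h1 : (b - a) * (2*K) ≤ (n:ℝ) + 1 := by linarith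
    have h2 : (b - a) ≤ ((n:ℝ) + 1) / (2*K) := by
      rw [le_div_iff₀ (by positivity)]
      linarith
    rw [div_eq_mul_inv] at h2
    linarith
  refine ⟨y, hy0, fun x hx => (hy x ⟨hx.1, le_trans hx.2 hB⟩).mono (Icc_subset_Icc_right hB)⟩


/-- Constancy of the Wronskian of two solutions. -/
lemma wronskian_const {Q : ℝ → ℝ} {a b : ℝ} (hab : a ≤ b) {f1 f2 g1 g2 : ℝ → ℝ}
    (hf1 : ∀ x ∈ Icc a b, HasDerivWithinAt f1 (f2 x) (Icc a b) x)
    (hf2 : ∀ x ∈ Icc a b, HasDerivWithinAt f2 (Q x * f1 x) (Icc a b) x)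
    (hg1 : ∀ x ∈ Icc a b, HasDerivWithinAt g1 (g2 x) (Icc a b) x)
    (hg2 : ∀ x ∈ Icc a b, HasDerivWithinAt g2 (Q x * g1 x) (Icc a b) x) :
    ∀ x ∈ Icc a b, f1 x * g2 x - f2 x * g1 x = f1 a * g2 a - f2 a * g1 a := by
  set W : ℝ → ℝ := fun x => f1 x * g2 x - f2 x * g1 x with hW
  have hWd : ∀ x ∈ Icc a b, HasDerivWithinAt W 0 (Icc a b) x := by
    intro x hx
    have h := ((hf1 x hx).mul (hg2 x hx)).sub ((hf2 x hx).mul (hg1 x hx))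
    convert h using 1
    all_goals first | rfl | ring
  have hcont : ContinuousOn W (Icc a b) := fun x hx => (hWd x hx).continuousWithinAt
  exact constant_of_has_deriv_right_zero hcont (fun x hx =>
    (hWd x (Ico_subset_Icc_self hx)).mono_of_mem_nhdsWithin (Icc_mem_nhdsGE_of_mem hx))

/-- Monotonicity from a nonnegative derivative on a closed interval. -/
lemma mono_aux {a b : ℝ} {A A' : ℝ → ℝ} (h : ∀ x ∈ Icc a b, HasDerivAt A (A' x) x)
    (h' : ∀ x ∈ Ioo a b, 0 ≤ A' x) : MonotoneOn A (Icc a b) := by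
  apply monotoneOn_of_deriv_nonneg (convex_Icc a b)
  · exact fun x hx => (h x hx).continuousAt.continuousWithinAt
  · intro x hx
    rw [interior_Icc] at hx
    exact (h x (Ioo_subset_Icc_self hx)).differentiableAt.differentiableWithinAt
  · intro x hx
    rw [interior_Icc] at hx
    rw [(h x (Ioo_subset_Icc_self hx)).deriv]
    exact h' x hx

/-- Core comparison: `D'' ≥ m² D`, `D 0 = D' 0 = 0` implies `D ≥ 0`. -/
lemma nonneg_of_ineq {L m : ℝ} (hL : 0 ≤ L) (hm : 0 ≤ m) {D D1 D2 : ℝ → ℝ}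
    (hD : ∀ x ∈ Icc 0 L, HasDerivAt D (D1 x) x)
    (hD1 : ∀ x ∈ Icc 0 L, HasDerivAt D1 (D2 x) x)
    (h0 : D 0 = 0) (h1 : D1 0 = 0)
    (hineq : ∀ x ∈ Icc 0 L, m^2 * D x ≤ D2 x) :
    ∀ x ∈ Icc 0 L, 0 ≤ D x := by
  set A : ℝ → ℝ := fun x => (D1 x + m * D x) * Real.exp (-m * x) with hA
  have hAd : ∀ x ∈ Icc 0 L, HasDerivAt A
      ((D2 x - m^2 * D x) * Real.exp (-m * x)) x := by
    intro x hx
    have he : HasDerivAt (fun y : ℝ => Real.exp (-m * y)) (Real.exp (-m * x) * (-m * 1)) x :=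
      ((hasDerivAt_id x).const_mul (-m)).exp
    have h := ((hD1 x hx).add ((hD x hx).const_mul m)).mul he
    convert h using 1
    all_goals first | rfl | (simp only [Pi.add_apply]; ring)
  have hmono : MonotoneOn A (Icc 0 L) :=
    mono_aux hAd (fun x hx => by
      have := hineq x (Ioo_subset_Icc_self hx)
      have he := (Real.exp_pos (-m * x)).le
      nlinarith)
  have hA0 : A 0 = 0 := by simp [hA, h0, h1]
  have hstep : ∀ x ∈ Icc 0 L, 0 ≤ D1 x + m * D x := by
    intro x hx
    have h2 : A 0 ≤ A x := hmono (left_mem_Icc.mpr hL) hx hx.1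
    rw [hA0] at h2
    have he := Real.exp_pos (-m * x)
    simp only [hA] at h2
    nlinarith
  set B : ℝ → ℝ := fun x => D x * Real.exp (m * x) with hB
  have hBd : ∀ x ∈ Icc 0 L, HasDerivAt B
      ((D1 x + m * D x) * Real.exp (m * x)) x := by
    intro x hx
    have he : HasDerivAt (fun y : ℝ => Real.exp (m * y)) (Real.exp (m * x) * (m * 1)) x :=
      ((hasDerivAt_id x).const_mul m).exp
    have h := (hD x hx).mul he
    convert h using 1
    all_goals first | rfl | ring
  have hBmono : MonotoneOn B (Icc 0 L) :=
    mono_aux hBd (fun x hx => by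
      have := hstep x (Ioo_subset_Icc_self hx)
      have he := (Real.exp_pos (m * x)).le
      nlinarith)
  intro x hx
  have hB0 : B 0 = 0 := by simp [hB, h0]
  have h2 : B 0 ≤ B x := hBmono (left_mem_Icc.mpr hL) hx hx.1
  rw [hB0] at h2
  simp only [hB] at h2
  have he := Real.exp_pos (m * x)
  nlinarith

/-- The solution with `u(0) = 0`, `u'(0) = 1` of `u'' = q u`, `q ≥ 0`, is nonnegative. -/
lemma sol_nonneg {L : ℝ} (hL : 0 ≤ L) {q u1 u2 : ℝ → ℝ}
    (hu1 : ∀ x ∈ Icc 0 L, HasDerivAt u1 (u2 x) x)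
    (hu2 : ∀ x ∈ Icc 0 L, HasDerivAt u2 (q x * u1 x) x)
    (hq : ∀ x ∈ Icc 0 L, 0 ≤ q x) (h0 : u1 0 = 0) (h0' : u2 0 = 1) :
    ∀ x ∈ Icc 0 L, 0 ≤ u1 x := by
  have hmem0 : (0:ℝ) ∈ Icc 0 L := left_mem_Icc.mpr hL
  have hu2pos : ∀ x ∈ Icc 0 L, 0 < u2 x := by
    by_contra hcon
    push_neg at hcon
    obtain ⟨c0, hc0, hc0'⟩ := hcon
    set Z : Set ℝ := Icc 0 L ∩ u2 ⁻¹' (Iic 0) with hZ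
    have hZc : IsClosed Z := by
      apply ContinuousOn.preimage_isClosed_of_isClosed _ isClosed_Icc isClosed_Iic
      exact fun x hx => (hu2 x hx).continuousAt.continuousWithinAt
    have hne : Z.Nonempty := ⟨c0, hc0, by simpa using hc0'⟩
    have hbdd : BddBelow Z := ⟨0, fun x hx => hx.1.1⟩
    set c := sInf Z with hc
    have hcZ : c ∈ Z := hZc.csInf_mem hne hbdd
    have hcI : c ∈ Icc 0 L := hcZ.1
    have hcu : u2 c ≤ 0 := hcZ.2
    have hc0ne : c ≠ 0 := fun h => by rw [h, h0'] at hcu; linarith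
    have hcpos : 0 < c := lt_of_le_of_ne hcI.1 (Ne.symm hc0ne)
    have hlt : ∀ x ∈ Ico 0 c, 0 < u2 x := by
      intro x hx
      by_contra hx'
      push_neg at hx'
      have hxZ : x ∈ Z := ⟨⟨hx.1, le_trans hx.2.le hcI.2⟩, by simpa using hx'⟩
      have := csInf_le hbdd hxZ
      rw [← hc] at this
      linarith [hx.2]
    have hsub : Icc 0 c ⊆ Icc 0 L := Icc_subset_Icc_right hcI.2
    have hu1mono : MonotoneOn u1 (Icc 0 c) :=
      mono_aux (fun x hx => hu1 x (hsub hx))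
        (fun x hx => (hlt x ⟨hx.1.le, hx.2⟩).le)
    have hu1nn : ∀ x ∈ Icc 0 c, 0 ≤ u1 x := by
      intro x hx
      have := hu1mono (left_mem_Icc.mpr hcpos.le) hx hx.1
      rwa [h0] at this
    have hu2mono : MonotoneOn u2 (Icc 0 c) :=
      mono_aux (fun x hx => hu2 x (hsub hx))
        (fun x hx => mul_nonneg (hq x (hsub (Ioo_subset_Icc_self hx)))
          (hu1nn x (Ioo_subset_Icc_self hx)))
    have := hu2mono (left_mem_Icc.mpr hcpos.le) (right_mem_Icc.mpr hcpos.le) hcpos.le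
    rw [h0'] at this
    linarith
  have hu1mono : MonotoneOn u1 (Icc 0 L) :=
    mono_aux hu1 (fun x hx => (hu2pos x (Ioo_subset_Icc_self hx)).le)
  intro x hx
  have := hu1mono hmem0 hx hx.1
  rwa [h0] at this


lemma sinh_hasDerivAt (m x : ℝ) (hm : m ≠ 0) :
    HasDerivAt (fun y => Real.sinh (m*y)/m) (Real.cosh (m*x)) x := by
  have h := (((hasDerivAt_id x).const_mul m).sinh).div_const m
  convert h using 1
  all_goals first | rfl | (simp only [id, mul_one]; field_simp)

lemma cosh_hasDerivAt (m x : ℝ) :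
    HasDerivAt (fun y => Real.cosh (m*y)) (m * Real.sinh (m*x)) x := by
  have h := ((hasDerivAt_id x).const_mul m).cosh
  convert h using 1
  all_goals first | rfl | (simp [id]; ring) | simp [id]

/-- Comparison bounds for the solution `u(0)=0, u'(0)=1` of `u'' = q u`. -/
lemma sol_bounds {L : ℝ} (hL : 0 < L) {q u1 u2 : ℝ → ℝ} {m M : ℝ} (hm : 0 < m) (hM : 0 < M)
    (hu1 : ∀ x ∈ Icc 0 L, HasDerivAt u1 (u2 x) x)
    (hu2 : ∀ x ∈ Icc 0 L, HasDerivAt u2 (q x * u1 x) x)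
    (hql : ∀ x ∈ Icc 0 L, m^2 ≤ q x) (hqu : ∀ x ∈ Icc 0 L, q x ≤ M^2)
    (h0 : u1 0 = 0) (h0' : u2 0 = 1) :
    Real.sinh (m*L)/m ≤ u1 L ∧ u1 L ≤ Real.sinh (M*L)/M := by
  have hLmem : L ∈ Icc 0 L := right_mem_Icc.mpr hL.le
  have hq0 : ∀ x ∈ Icc 0 L, 0 ≤ q x := fun x hx => le_trans (by positivity) (hql x hx)
  have hu1nn : ∀ x ∈ Icc 0 L, 0 ≤ u1 x := sol_nonneg hL.le hu1 hu2 hq0 h0 h0'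
  constructor
  · have key := nonneg_of_ineq (D := fun x => u1 x - Real.sinh (m*x)/m)
      (D1 := fun x => u2 x - Real.cosh (m*x))
      (D2 := fun x => q x * u1 x - m * Real.sinh (m*x)) hL.le hm.le
      (fun x hx => (hu1 x hx).sub (sinh_hasDerivAt m x hm.ne'))
      (fun x hx => (hu2 x hx).sub (cosh_hasDerivAt m x))
      (by simp [h0]) (by simp [h0'])
      (fun x hx => by
        have h1 := hql x hx
        have h2 := hu1nn x hx
        have : m^2 * (Real.sinh (m*x)/m) = m * Real.sinh (m*x) := by
          field_simp
        nlinarith)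
    have := key L hLmem
    linarith
  · have key := nonneg_of_ineq (D := fun x => Real.sinh (M*x)/M - u1 x)
      (D1 := fun x => Real.cosh (M*x) - u2 x)
      (D2 := fun x => M * Real.sinh (M*x) - q x * u1 x) hL.le hM.le
      (fun x hx => (sinh_hasDerivAt M x hM.ne').sub (hu1 x hx))
      (fun x hx => (cosh_hasDerivAt M x).sub (hu2 x hx))
      (by simp [h0]) (by simp [h0'])
      (fun x hx => by
        have h1 := hqu x hx
        have h2 := hu1nn x hx
        have : M^2 * (Real.sinh (M*x)/M) = M * Real.sinh (M*x) := by
          field_simp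
        nlinarith)
    have := key L hLmem
    linarith

/-- Being C² on an open set from explicit derivative data. -/
lemma contDiffOn_two {O : Set ℝ} (hO : IsOpen O) {f f1 f2 : ℝ → ℝ}
    (h1 : ∀ y ∈ O, HasDerivAt f (f1 y) y) (h2 : ∀ y ∈ O, HasDerivAt f1 (f2 y) y)
    (h3 : ContinuousOn f2 O) : ContDiffOn ℝ 2 f O := by
  have hd1 : ∀ y ∈ O, deriv f y = f1 y := fun y hy => (h1 y hy).deriv
  have hd2 : ∀ y ∈ O, deriv f1 y = f2 y := fun y hy => (h2 y hy).deriv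
  have hf1 : ContDiffOn ℝ ((0:WithTop ℕ∞)+1) f1 O := by
    rw [contDiffOn_succ_iff_deriv_of_isOpen hO]
    refine ⟨fun y hy => (h2 y hy).differentiableAt.differentiableWithinAt, by simp, ?_⟩
    rw [contDiffOn_zero]
    exact ContinuousOn.congr h3 (fun y hy => hd2 y hy)
  have h : ContDiffOn ℝ ((1:WithTop ℕ∞)+1) f O := by
    rw [contDiffOn_succ_iff_deriv_of_isOpen hO]
    refine ⟨fun y hy => (h1 y hy).differentiableAt.differentiableWithinAt, by simp, ?_⟩
    exact ContDiffOn.congr (by exact_mod_cast hf1) hd1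
  exact_mod_cast h


lemma hasDerivWithinAt_fst {y : ℝ → ℝ × ℝ} {d : ℝ × ℝ} {s : Set ℝ} {x : ℝ}
    (h : HasDerivWithinAt y d s x) : HasDerivWithinAt (fun x => (y x).1) d.1 s x := by
  exact (ContinuousLinearMap.fst ℝ ℝ ℝ).hasFDerivAt.comp_hasDerivWithinAt x h

lemma hasDerivWithinAt_snd {y : ℝ → ℝ × ℝ} {d : ℝ × ℝ} {s : Set ℝ} {x : ℝ}
    (h : HasDerivWithinAt y d s x) : HasDerivWithinAt (fun x => (y x).2) d.2 s x := by
  exact (ContinuousLinearMap.snd ℝ ℝ ℝ).hasFDerivAt.comp_hasDerivWithinAt x h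

set_option maxHeartbeats 2000000 in
/-- The main per-`t` construction. -/
lemma master {L : ℝ} (hL : 0 < L) {V : ℝ → ℝ} (hVc : Continuous V)
    {c₁ c₂ : ℝ} (hc₁ : ∀ x ∈ Icc 0 L, c₁ ≤ V x) (hc₂ : ∀ x ∈ Icc 0 L, V x ≤ c₂)
    (t : ℝ) (ht1 : 1 ≤ t) (htc : 1 ≤ t^2 + c₁) (hc12 : c₁ ≤ c₂) :
    ∃ f : ℝ → ℝ,
      (ContDiff ℝ 2 f ∧ (∀ x ∈ Icc 0 L, deriv (deriv f) x = (V x + t^2) * f x) ∧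
        f 0 = 1 ∧ f L = 0) ∧
      (∀ g : ℝ → ℝ, ContDiff ℝ 2 g →
        (∀ x ∈ Icc 0 L, deriv (deriv g) x = (V x + t^2) * g x) →
        g 0 = 1 → g L = 0 → Set.EqOn g f (Icc 0 L)) ∧
      (-(Real.sqrt (t^2+c₁) / Real.sinh (Real.sqrt (t^2+c₁) * L)) ≤ deriv f L ∧
        deriv f L ≤ -(Real.sqrt (t^2+c₂) / Real.sinh (Real.sqrt (t^2+c₂) * L))) := by
  have ht2 : 1 ≤ t^2 := by nlinarith
  -- the clamp map and the globally bounded coefficient Q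
  set cl : ℝ → ℝ := fun x => max 0 (min x L) with hcl
  have hclcont : Continuous cl := continuous_const.max (continuous_id.min continuous_const)
  have hclmem : ∀ x, cl x ∈ Icc 0 L :=
    fun x => ⟨le_max_left _ _, max_le hL.le (min_le_right _ _)⟩
  have hcleq : ∀ x ∈ Icc 0 L, cl x = x := by
    intro x hx
    simp only [hcl]
    rw [min_eq_left hx.2, max_eq_right hx.1]
  set Q : ℝ → ℝ := fun x => V (cl x) + t^2 with hQ
  have hQc : Continuous Q := (hVc.comp hclcont).add continuous_const
  set K : ℝ := t^2 + max |c₁| |c₂| with hKdef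
  have hK1 : 1 ≤ K := by
    have := le_max_left |c₁| |c₂|
    have := abs_nonneg c₁
    simp only [hKdef]
    nlinarith
  have hQb : ∀ x, t^2 + c₁ ≤ Q x ∧ Q x ≤ t^2 + c₂ := by
    intro x
    have h1 := hc₁ _ (hclmem x)
    have h2 := hc₂ _ (hclmem x)
    constructor <;> simp only [hQ] <;> nlinarith
  have hQK : ∀ x, |Q x| ≤ K := by
    intro x
    obtain ⟨h1, h2⟩ := hQb x
    have ha := le_max_left |c₁| |c₂|
    have hb := le_max_right |c₁| |c₂|
    have hc := neg_abs_le c₁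
    have hd := le_abs_self c₂
    rw [abs_le]
    constructor <;> simp only [hKdef] <;> nlinarith
  have hQeq : ∀ x ∈ Icc 0 L, Q x = V x + t^2 := by
    intro x hx; simp only [hQ]; rw [hcleq x hx]
  -- square roots
  set m : ℝ := Real.sqrt (t^2 + c₁) with hmdef
  set M : ℝ := Real.sqrt (t^2 + c₂) with hMdef
  have hm2 : m^2 = t^2 + c₁ := Real.sq_sqrt (by nlinarith)
  have hM2 : M^2 = t^2 + c₂ := Real.sq_sqrt (by nlinarith)
  have hm0 : 0 < m := Real.sqrt_pos.mpr (by nlinarith)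
  have hM0 : 0 < M := Real.sqrt_pos.mpr (by nlinarith)
  have hQl : ∀ x ∈ Icc 0 L, m^2 ≤ Q x := fun x hx => by rw [hm2]; exact (hQb x).1
  have hQu : ∀ x ∈ Icc 0 L, Q x ≤ M^2 := fun x hx => by rw [hM2]; exact (hQb x).2
  -- basis solutions on [-1, L+1]
  have hab : (-1:ℝ) ≤ L + 1 := by linarith
  obtain ⟨y1, hy10, hy1⟩ := solve hQc hK1 hQK (-1) (L+1) hab (1,0)
  obtain ⟨y2, hy20, hy2⟩ := solve hQc hK1 hQK (-1) (L+1) hab (0,1)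
  set O : Set ℝ := Ioo (-1) (L+1) with hO
  have hOopen : IsOpen O := isOpen_Ioo
  have hIccO : Icc 0 L ⊆ O := fun x hx => ⟨by linarith [hx.1], by linarith [hx.2]⟩
  have hOIcc : O ⊆ Icc (-1) (L+1) := Ioo_subset_Icc_self
  have h0mem : (0:ℝ) ∈ Icc (-1) (L+1) := ⟨by linarith, by linarith⟩
  -- full derivatives of the components on O
  have hy1f : ∀ x ∈ O, HasDerivAt (fun x => (y1 x).1) ((y1 x).2) x := fun x hx =>
    (hasDerivWithinAt_fst (hy1 x (hOIcc hx))).hasDerivAt (Icc_mem_nhds hx.1 hx.2)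
  have hy1s : ∀ x ∈ O, HasDerivAt (fun x => (y1 x).2) (Q x * (y1 x).1) x := fun x hx =>
    (hasDerivWithinAt_snd (hy1 x (hOIcc hx))).hasDerivAt (Icc_mem_nhds hx.1 hx.2)
  have hy2f : ∀ x ∈ O, HasDerivAt (fun x => (y2 x).1) ((y2 x).2) x := fun x hx =>
    (hasDerivWithinAt_fst (hy2 x (hOIcc hx))).hasDerivAt (Icc_mem_nhds hx.1 hx.2)
  have hy2s : ∀ x ∈ O, HasDerivAt (fun x => (y2 x).2) (Q x * (y2 x).1) x := fun x hx =>
    (hasDerivWithinAt_snd (hy2 x (hOIcc hx))).hasDerivAt (Icc_mem_nhds hx.1 hx.2)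
  -- Wronskian of the basis equals 1
  have hW := wronskian_const hab (fun x hx => hasDerivWithinAt_fst (hy1 x hx))
    (fun x hx => hasDerivWithinAt_snd (hy1 x hx))
    (fun x hx => hasDerivWithinAt_fst (hy2 x hx))
    (fun x hx => hasDerivWithinAt_snd (hy2 x hx))
  have hW0 : (y1 0).1 * (y2 0).2 - (y1 0).2 * (y2 0).1 = 1 := by
    have := hW 0 h0mem
    rw [hy10, hy20] at this
    simpa [vf] using this
  -- the normalized solutions u (u(0)=0, u'(0)=1) and v (v(0)=1, v'(0)=0)
  set u1 : ℝ → ℝ := fun x => -(y2 0).1 * (y1 x).1 + (y1 0).1 * (y2 x).1 with hu1def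
  set u2 : ℝ → ℝ := fun x => -(y2 0).1 * (y1 x).2 + (y1 0).1 * (y2 x).2 with hu2def
  set v1 : ℝ → ℝ := fun x => (y2 0).2 * (y1 x).1 + -(y1 0).2 * (y2 x).1 with hv1def
  set v2 : ℝ → ℝ := fun x => (y2 0).2 * (y1 x).2 + -(y1 0).2 * (y2 x).2 with hv2def
  have hu10 : u1 0 = 0 := by simp only [hu1def]; ring
  have hu20 : u2 0 = 1 := by simp only [hu2def]; nlinarith [hW0]
  have hv10 : v1 0 = 1 := by simp only [hv1def]; nlinarith [hW0]
  have hv20 : v2 0 = 0 := by simp only [hv2def]; ring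
  have hu1d : ∀ x ∈ O, HasDerivAt u1 (u2 x) x := fun x hx =>
    ((hy1f x hx).const_mul _).add ((hy2f x hx).const_mul _)
  have hu2d : ∀ x ∈ O, HasDerivAt u2 (Q x * u1 x) x := by
    intro x hx
    have h := ((hy1s x hx).const_mul (-(y2 0).1)).add ((hy2s x hx).const_mul ((y1 0).1))
    convert h using 1
    all_goals first | rfl | (simp only [hu1def]; ring) | ring
  have hv1d : ∀ x ∈ O, HasDerivAt v1 (v2 x) x := fun x hx =>
    ((hy1f x hx).const_mul _).add ((hy2f x hx).const_mul _)
  have hv2d : ∀ x ∈ O, HasDerivAt v2 (Q x * v1 x) x := by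
    intro x hx
    have h := ((hy1s x hx).const_mul ((y2 0).2)).add ((hy2s x hx).const_mul (-(y1 0).2))
    convert h using 1
    all_goals first | rfl | (simp only [hv1def]; ring) | ring
  -- comparison bounds for u1
  have hu1I : ∀ x ∈ Icc 0 L, HasDerivAt u1 (u2 x) x := fun x hx => hu1d x (hIccO hx)
  have hu2I : ∀ x ∈ Icc 0 L, HasDerivAt u2 (Q x * u1 x) x := fun x hx => hu2d x (hIccO hx)
  have hbounds := sol_bounds hL hm0 hM0 hu1I hu2I hQl hQu hu10 hu20
  have hsinhm : 0 < Real.sinh (m * L) := Real.sinh_pos_iff.mpr (mul_pos hm0 hL)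
  have hsinhM : 0 < Real.sinh (M * L) := Real.sinh_pos_iff.mpr (mul_pos hM0 hL)
  have hu1L : 0 < u1 L := lt_of_lt_of_le (div_pos hsinhm hm0) hbounds.1
  -- Wronskian of u, v equals -1
  have hW2 := wronskian_const hL.le
    (fun x hx => (hu1I x hx).hasDerivWithinAt) (fun x hx => (hu2I x hx).hasDerivWithinAt)
    (fun x hx => (hv1d x (hIccO hx)).hasDerivWithinAt)
    (fun x hx => (hv2d x (hIccO hx)).hasDerivWithinAt)
  have hW2L : u1 L * v2 L - u2 L * v1 L = -1 := by
    have := hW2 L (right_mem_Icc.mpr hL.le)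
    rw [hu10, hu20, hv10, hv20] at this
    simpa using this
  -- the BVP solution
  set r : ℝ := v1 L / u1 L with hrdef
  set f1 : ℝ → ℝ := fun x => v1 x - r * u1 x with hf1def
  set f2 : ℝ → ℝ := fun x => v2 x - r * u2 x with hf2def
  have hf1d : ∀ x ∈ O, HasDerivAt f1 (f2 x) x := fun x hx =>
    (hv1d x hx).sub ((hu1d x hx).const_mul r)
  have hf2d : ∀ x ∈ O, HasDerivAt f2 (Q x * f1 x) x := by
    intro x hx
    have h := (hv2d x hx).sub ((hu2d x hx).const_mul r)
    convert h using 1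
    all_goals first | rfl | (simp only [hf1def]; ring) | ring
  have hf10 : f1 0 = 1 := by simp only [hf1def]; rw [hu10, hv10]; ring
  have hf1L : f1 L = 0 := by
    simp only [hf1def, hrdef]
    field_simp
    ring
  have hf2L : f2 L = -1 / u1 L := by
    simp only [hf2def, hrdef]
    field_simp
    nlinarith [hW2L]
  -- the bump function and the global solution F
  set bump : ContDiffBump (L/2 : ℝ) := ⟨L/2 + 1/4, L/2 + 1/2, by linarith, by linarith⟩
    with hbump
  have hrin : bump.rIn = L/2 + 1/4 := rfl
  have hrout : bump.rOut = L/2 + 1/2 := rfl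
  have hbin : Metric.closedBall (L/2 : ℝ) bump.rIn = Icc (-(1/4)) (L + 1/4) := by
    rw [Real.closedBall_eq_Icc, hrin]
    congr 1 <;> ring
  have hbout : tsupport (⇑bump) = Icc (-(1/2)) (L + 1/2) := by
    rw [ContDiffBump.tsupport_eq, Real.closedBall_eq_Icc, hrout]
    congr 1 <;> ring
  set F : ℝ → ℝ := fun x => bump x * f1 x with hFdef
  have hFf1 : ∀ y ∈ Ioo (-(1/4) : ℝ) (L + 1/4), F y = f1 y := by
    intro y hy
    have : bump y = 1 := bump.one_of_mem_closedBall (by rw [hbin]; exact Ioo_subset_Icc_self hy)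
    simp only [hFdef, this, one_mul]
  have hIccN : Icc 0 L ⊆ Ioo (-(1/4) : ℝ) (L + 1/4) :=
    fun x hx => ⟨by linarith [hx.1], by linarith [hx.2]⟩
  have hNO : Ioo (-(1/4) : ℝ) (L + 1/4) ⊆ O := fun x hx => ⟨by linarith [hx.1], by linarith [hx.2]⟩
  -- smoothness
  have hf1C2 : ContDiffOn ℝ 2 f1 O :=
    contDiffOn_two hOopen hf1d hf2d
      ((hQc.continuousOn).mul (fun x hx => (hf1d x hx).continuousAt.continuousWithinAt))
  have hFC2 : ContDiff ℝ 2 F := by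
    rw [contDiff_iff_contDiffAt]
    intro x
    by_cases hx : x ∈ O
    · exact (bump.contDiffAt).mul (hf1C2.contDiffAt (hOopen.mem_nhds hx))
    · have hxs : x ∉ tsupport (⇑bump) := by
        rw [hbout]
        intro hmem
        exact hx ⟨by linarith [hmem.1], by linarith [hmem.2]⟩
      have hev : F =ᶠ[𝓝 x] (fun _ => (0:ℝ)) := by
        apply Filter.eventuallyEq_of_mem ((isClosed_tsupport _).isOpen_compl.mem_nhds hxs)
        intro y hy
        simp only [hFdef, image_eq_zero_of_notMem_tsupport hy, zero_mul]
      exact contDiffAt_const.congr_of_eventuallyEq hev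
  -- derivative identities for F on [0, L]
  have hderivF : ∀ x ∈ Icc 0 L, deriv F x = f2 x := by
    intro x hx
    have hev : F =ᶠ[𝓝 x] f1 :=
      Filter.eventuallyEq_of_mem (isOpen_Ioo.mem_nhds (hIccN hx)) hFf1
    rw [hev.deriv_eq]
    exact (hf1d x (hIccO hx)).deriv
  have hderivF2 : ∀ x ∈ Icc 0 L, deriv (deriv F) x = (V x + t^2) * F x := by
    intro x hx
    have hev : F =ᶠ[𝓝 x] f1 :=
      Filter.eventuallyEq_of_mem (isOpen_Ioo.mem_nhds (hIccN hx)) hFf1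
    have hev1 : deriv F =ᶠ[𝓝 x] f2 := by
      refine (hev.deriv).trans ?_
      apply Filter.eventuallyEq_of_mem (hOopen.mem_nhds (hIccO hx))
      intro y hy
      exact (hf1d y hy).deriv
    rw [hev1.deriv_eq, (hf2d x (hIccO hx)).deriv, hQeq x hx, hFf1 x (hIccN hx)]
  have hF0 : F 0 = 1 := by rw [hFf1 0 (hIccN (left_mem_Icc.mpr hL.le))]; exact hf10
  have hFL : F L = 0 := by rw [hFf1 L (hIccN (right_mem_Icc.mpr hL.le))]; exact hf1L
  have hdFL : deriv F L = -1 / u1 L := by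
    rw [hderivF L (right_mem_Icc.mpr hL.le)]; exact hf2L
  refine ⟨F, ⟨hFC2, hderivF2, hF0, hFL⟩, ?_, ?_, ?_⟩
  · -- uniqueness
    intro g hg2 hgode hg0 hgL
    have hgdiff : Differentiable ℝ g := hg2.differentiable (by norm_num)
    have hdg : ContDiff ℝ 1 (deriv g) := by
      have h2 : ContDiff ℝ ((1:WithTop ℕ∞)+1) g := by exact_mod_cast hg2
      exact (contDiff_succ_iff_deriv.mp h2).2.2
    have hdgd : Differentiable ℝ (deriv g) := hdg.differentiable one_ne_zero
    set w1 : ℝ → ℝ := fun x => g x - f1 x with hw1def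
    set w2 : ℝ → ℝ := fun x => deriv g x - f2 x with hw2def
    set d : ℝ := deriv g 0 - f2 0 with hddef
    set Yw : ℝ → ℝ × ℝ := fun x => (w1 x, w2 x) with hYwdef
    set z : ℝ → ℝ × ℝ := fun x => (d * u1 x, d * u2 x) with hzdef
    have hYwd : ∀ x ∈ Icc 0 L, HasDerivAt Yw (vf Q x (Yw x)) x := by
      intro x hx
      have h1 : HasDerivAt w1 (w2 x) x :=
        ((hgdiff x).hasDerivAt).sub (hf1d x (hIccO hx))
      have h2 : HasDerivAt w2 (Q x * w1 x) x := by
        have h := ((hdgd x).hasDerivAt).sub (hf2d x (hIccO hx))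
        have heq : deriv (deriv g) x - Q x * f1 x = Q x * w1 x := by
          rw [hgode x hx, hQeq x hx]
          simp only [hw1def]
          ring
        rwa [heq] at h
      exact h1.prodMk h2
    have hzd : ∀ x ∈ Icc 0 L, HasDerivAt z (vf Q x (z x)) x := by
      intro x hx
      have h1 : HasDerivAt (fun x => d * u1 x) (d * u2 x) x := (hu1I x hx).const_mul d
      have h2 : HasDerivAt (fun x => d * u2 x) (Q x * (d * u1 x)) x := by
        have h := (hu2I x hx).const_mul d
        convert h using 1
        all_goals first | rfl | ring
      exact h1.prodMk h2
    have heq0 : Yw 0 = z 0 := by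
      simp only [hYwdef, hzdef, hw1def, hw2def, hu10, hu20, hg0, hf10, hddef]
      norm_num
    have huniq : Set.EqOn Yw z (Icc 0 L) := by
      apply ODE_solution_unique (v := vf Q) (K := Real.toNNReal K) (vf_lip hK1 hQK)
      · exact fun x hx => (hYwd x hx).continuousAt.continuousWithinAt
      · exact fun x hx => (hYwd x (Ico_subset_Icc_self hx)).hasDerivWithinAt.mono_of_mem_nhdsWithin
          (Icc_mem_nhdsGE_of_mem hx)
      · exact fun x hx => (hzd x hx).continuousAt.continuousWithinAt
      · exact fun x hx => (hzd x (Ico_subset_Icc_self hx)).hasDerivWithinAt.mono_of_mem_nhdsWithin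
          (Icc_mem_nhdsGE_of_mem hx)
      · exact heq0
    have hd0 : d = 0 := by
      have hL' := huniq (right_mem_Icc.mpr hL.le)
      have h1 : w1 L = d * u1 L := congrArg Prod.fst hL'
      have h2 : w1 L = 0 := by simp only [hw1def]; rw [hgL, hf1L]; ring
      rw [h2] at h1
      exact (mul_eq_zero.mp h1.symm).resolve_right hu1L.ne'
    intro x hx
    have hx' := huniq hx
    have h1 : w1 x = d * u1 x := congrArg Prod.fst hx'
    rw [hd0, zero_mul] at h1
    have : g x = f1 x := by simp only [hw1def] at h1; linarith
    rw [this, ← hFf1 x (hIccN hx)]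
  · -- lower bound for deriv F L
    rw [hdFL]
    have h1 : 1 / u1 L ≤ m / Real.sinh (m * L) := by
      rw [div_le_div_iff₀ hu1L hsinhm]
      have := hbounds.1
      have h2 : Real.sinh (m * L) ≤ m * u1 L := by
        have := (div_le_iff₀ hm0).mp hbounds.1
        linarith
      linarith
    have : -(m / Real.sinh (m*L)) ≤ -(1 / u1 L) := neg_le_neg h1
    calc -(m / Real.sinh (m*L)) ≤ -(1 / u1 L) := this
    _ = -1 / u1 L := by ring
  · -- upper bound for deriv F L
    rw [hdFL]
    have h1 : M / Real.sinh (M * L) ≤ 1 / u1 L := by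
      rw [div_le_div_iff₀ hsinhM hu1L]
      have h2 : M * u1 L ≤ Real.sinh (M * L) := by
        have := (le_div_iff₀ hM0).mp hbounds.2
        linarith
      linarith
    calc (-1) / u1 L = -(1 / u1 L) := by ring
    _ ≤ -(M / Real.sinh (M*L)) := neg_le_neg h1


set_option maxHeartbeats 1000000 in
/-- The asymptotics of the bound `-√(t²+c)/sinh(√(t²+c) L)`, scaled by `e^{tL}/t`. -/
lemma tendsto_bound (L c : ℝ) (hL : 0 < L) :
    Tendsto (fun t : ℝ => Real.exp (t*L) * (-(Real.sqrt (t^2+c) / Real.sinh (Real.sqrt (t^2+c) * L))) / t)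
      atTop (nhds (-2)) := by
  set r : ℝ → ℝ := fun t => Real.sqrt (t^2+c) with hrdef
  have hev : ∀ᶠ t : ℝ in atTop, 1 ≤ t ∧ 0 < t^2 + c := by
    filter_upwards [eventually_ge_atTop (max 1 (|c|+1))] with t ht
    have h1 : (1:ℝ) ≤ t := le_trans (le_max_left _ _) ht
    have h2 : |c| + 1 ≤ t := le_trans (le_max_right _ _) ht
    refine ⟨h1, ?_⟩
    have := neg_abs_le c
    nlinarith
  have hr0 : ∀ t : ℝ, 0 ≤ r t := fun t => Real.sqrt_nonneg _
  have hrsq : ∀ t : ℝ, 0 < t^2 + c → (r t)^2 = t^2 + c := fun t ht => Real.sq_sqrt ht.le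
  -- r t - t → 0
  have htend0 : Tendsto (fun t => r t - t) atTop (nhds 0) := by
    have h1 : Tendsto (fun t : ℝ => c / (r t + t)) atTop (nhds 0) := by
      apply Tendsto.div_atTop tendsto_const_nhds
      exact tendsto_atTop_mono (fun t => le_add_of_nonneg_left (hr0 t)) tendsto_id
    apply Tendsto.congr' _ h1
    filter_upwards [hev] with t ⟨ht1, htc⟩
    have hrt : 0 < r t + t := by nlinarith [hr0 t]
    rw [div_eq_iff hrt.ne']
    nlinarith [hrsq t htc]
  -- r → ∞
  have hrtop : Tendsto r atTop atTop := by
    apply tendsto_atTop_mono' atTop (f₁ := fun t : ℝ => t - 1)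
    · filter_upwards [htend0.eventually (Metric.ball_mem_nhds (0:ℝ) one_pos)] with t ht
      rw [Real.dist_eq, sub_zero] at ht
      have := abs_lt.mp ht
      linarith [this.1]
    · simpa [sub_eq_add_neg] using tendsto_atTop_add_const_right atTop (-1 : ℝ) tendsto_id
  have hrplust : Tendsto (fun t => r t + t) atTop atTop :=
    tendsto_atTop_mono (fun t => le_add_of_nonneg_left (hr0 t)) tendsto_id
  -- the denominator D
  set D : ℝ → ℝ := fun t => Real.exp ((r t - t)*L) - Real.exp (-((r t + t)*L)) with hDdef
  have hD1 : Tendsto (fun t => Real.exp ((r t - t)*L)) atTop (nhds 1) := by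
    have h1 : Tendsto (fun t => (r t - t)*L) atTop (nhds (0*L)) := htend0.mul_const L
    rw [zero_mul] at h1
    have := (Real.continuous_exp.tendsto 0).comp h1
    simpa [Function.comp_def] using this
  have hD2 : Tendsto (fun t => Real.exp (-((r t + t)*L))) atTop (nhds 0) := by
    apply Real.tendsto_exp_atBot.comp
    exact tendsto_neg_atTop_atBot.comp (hrplust.atTop_mul_const hL)
  have hD : Tendsto D atTop (nhds 1) := by
    have := hD1.sub hD2
    simpa using this
  -- the exponential ratio
  have hExp : Tendsto (fun t => Real.exp (t*L) / Real.sinh (r t * L)) atTop (nhds 2) := by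
    have h2 : Tendsto (fun t => 2 / D t) atTop (nhds (2/1)) :=
      tendsto_const_nhds.div hD one_ne_zero
    norm_num at h2
    apply Tendsto.congr' _ h2
    filter_upwards [hev] with t ⟨ht1, htc⟩
    have hrpos : 0 < r t := Real.sqrt_pos.mpr htc
    have hE : (0:ℝ) < Real.exp (r t * L) - Real.exp (-(r t * L)) := by
      have := Real.exp_lt_exp.mpr (show -(r t * L) < r t * L by nlinarith)
      linarith
    have hD' : D t = (Real.exp (r t * L) - Real.exp (-(r t * L))) / Real.exp (t*L) := by
      simp only [hDdef]
      rw [show (r t - t)*L = r t * L - t * L by ring,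
        show -((r t + t)*L) = -(r t * L) - t * L by ring,
        Real.exp_sub, Real.exp_sub, div_sub_div_same]
    rw [hD', Real.sinh_eq]
    rw [div_div_eq_mul_div, div_div_eq_mul_div]
    rw [div_eq_div_iff hE.ne' (by positivity)]
    ring
  -- the ratio r t / t
  have hG : Tendsto (fun t => r t / t) atTop (nhds 1) := by
    have h1 : Tendsto (fun t : ℝ => (r t - t)/t + 1) atTop (nhds (0 + 1)) :=
      (htend0.div_atTop tendsto_id).add tendsto_const_nhds
    norm_num at h1
    apply Tendsto.congr' _ h1
    filter_upwards [hev] with t ⟨ht1, htc⟩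
    have ht0 : t ≠ 0 := by linarith
    field_simp
    ring
  -- assemble
  have hmain : Tendsto (fun t => -(r t / t * (Real.exp (t*L) / Real.sinh (r t * L))))
      atTop (nhds (-(1*2))) := (hG.mul hExp).neg
  rw [one_mul] at hmain
  apply Tendsto.congr' _ hmain
  filter_upwards [hev] with t ⟨ht1, htc⟩
  have hrpos : 0 < r t := Real.sqrt_pos.mpr htc
  have hsinh : 0 < Real.sinh (r t * L) := Real.sinh_pos_iff.mpr (by positivity)
  have ht0 : (0:ℝ) < t := by linarith
  field_simp
  simp only [hrdef]
  ring

end Stmt19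

/-- For a smooth potential `V` on `[0, L]` there is `T > 0` such that for every
`t ≥ T` the boundary value problem `f'' = (V + t²) f` on `[0, L]`, `f(0) = 1`,
`f(L) = 0`, has a unique C² solution `f_t` (unique on `[0, L]`), and
`e^{tL} f_t'(L) / t → -2` as `t → ∞`; in particular `f_t'(L)` vanishes
exponentially fast as `t → ∞`. -/
theorem stmt_19 (L : ℝ) (hL : 0 < L) (V : ℝ → ℝ) (hV : ContDiff ℝ (⊤ : ℕ∞) V) :
    ∃ T : ℝ, 0 < T ∧ ∃ F : ℝ → ℝ → ℝ,
      (∀ t : ℝ, T ≤ t →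
        (ContDiff ℝ 2 (F t) ∧
          (∀ x ∈ Set.Icc 0 L, deriv (deriv (F t)) x = (V x + t ^ 2) * F t x) ∧
          F t 0 = 1 ∧ F t L = 0) ∧
        (∀ g : ℝ → ℝ, ContDiff ℝ 2 g →
          (∀ x ∈ Set.Icc 0 L, deriv (deriv g) x = (V x + t ^ 2) * g x) →
          g 0 = 1 → g L = 0 → Set.EqOn g (F t) (Set.Icc 0 L))) ∧
      Tendsto (fun t : ℝ => Real.exp (t * L) * deriv (F t) L / t) atTop (nhds (-2)) := by
  classical
  have hVc : Continuous V := hV.continuous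
  have hne : (Set.Icc (0:ℝ) L).Nonempty := ⟨0, Set.left_mem_Icc.mpr hL.le⟩
  obtain ⟨x₁, hx₁, hmin⟩ := isCompact_Icc.exists_isMinOn hne hVc.continuousOn
  obtain ⟨x₂, hx₂, hmax⟩ := isCompact_Icc.exists_isMaxOn hne hVc.continuousOn
  set c₁ : ℝ := V x₁ with hc₁def
  set c₂ : ℝ := V x₂ with hc₂def
  have hc₁ : ∀ x ∈ Set.Icc 0 L, c₁ ≤ V x := fun x hx => isMinOn_iff.mp hmin x hx
  have hc₂ : ∀ x ∈ Set.Icc 0 L, V x ≤ c₂ := fun x hx => isMaxOn_iff.mp hmax x hx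
  have hc12 : c₁ ≤ c₂ := le_trans (hc₁ 0 (Set.left_mem_Icc.mpr hL.le))
    (hc₂ 0 (Set.left_mem_Icc.mpr hL.le))
  set T : ℝ := 1 + Real.sqrt (1 + |c₁|) with hTdef
  have hs2 : (Real.sqrt (1 + |c₁|))^2 = 1 + |c₁| := Real.sq_sqrt (by positivity)
  have hT0 : 0 < T := by
    have := Real.sqrt_nonneg (1 + |c₁|)
    simp only [hTdef]
    linarith
  have big : ∀ t : ℝ, T ≤ t →
      ∃ f : ℝ → ℝ,
      (ContDiff ℝ 2 f ∧ (∀ x ∈ Set.Icc 0 L, deriv (deriv f) x = (V x + t^2) * f x) ∧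
        f 0 = 1 ∧ f L = 0) ∧
      (∀ g : ℝ → ℝ, ContDiff ℝ 2 g →
        (∀ x ∈ Set.Icc 0 L, deriv (deriv g) x = (V x + t^2) * g x) →
        g 0 = 1 → g L = 0 → Set.EqOn g f (Set.Icc 0 L)) ∧
      (-(Real.sqrt (t^2+c₁) / Real.sinh (Real.sqrt (t^2+c₁) * L)) ≤ deriv f L ∧
        deriv f L ≤ -(Real.sqrt (t^2+c₂) / Real.sinh (Real.sqrt (t^2+c₂) * L))) := by
    intro t ht
    have hs0 := Real.sqrt_nonneg (1 + |c₁|)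
    have ht1 : 1 ≤ t := by simp only [hTdef] at ht; linarith
    have htT : T ≤ t := ht
    have htsq : T^2 ≤ t^2 := by nlinarith
    have htc : 1 ≤ t^2 + c₁ := by
      have h1 : 1 + |c₁| ≤ T^2 := by simp only [hTdef]; nlinarith
      have := neg_abs_le c₁
      nlinarith
    exact Stmt19.master hL hVc hc₁ hc₂ t ht1 htc hc12
  set F : ℝ → ℝ → ℝ := fun t => if h : T ≤ t then Classical.choose (big t h) else fun _ => 0
    with hFdef
  have hFspec : ∀ t : ℝ, ∀ h : T ≤ t,
      (ContDiff ℝ 2 (F t) ∧ (∀ x ∈ Set.Icc 0 L, deriv (deriv (F t)) x = (V x + t^2) * F t x) ∧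
        F t 0 = 1 ∧ F t L = 0) ∧
      (∀ g : ℝ → ℝ, ContDiff ℝ 2 g →
        (∀ x ∈ Set.Icc 0 L, deriv (deriv g) x = (V x + t^2) * g x) →
        g 0 = 1 → g L = 0 → Set.EqOn g (F t) (Set.Icc 0 L)) ∧
      (-(Real.sqrt (t^2+c₁) / Real.sinh (Real.sqrt (t^2+c₁) * L)) ≤ deriv (F t) L ∧
        deriv (F t) L ≤ -(Real.sqrt (t^2+c₂) / Real.sinh (Real.sqrt (t^2+c₂) * L))) := by
    intro t h
    have : F t = Classical.choose (big t h) := by simp only [hFdef, dif_pos h]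
    rw [this]
    exact Classical.choose_spec (big t h)
  refine ⟨T, hT0, F, fun t ht => ⟨(hFspec t ht).1, (hFspec t ht).2.1⟩, ?_⟩
  apply tendsto_of_tendsto_of_tendsto_of_le_of_le'
    (Stmt19.tendsto_bound L c₁ hL) (Stmt19.tendsto_bound L c₂ hL)
  · filter_upwards [eventually_ge_atTop T] with t ht
    have ht0 : 0 < t := lt_of_lt_of_le hT0 ht
    have hb := (hFspec t ht).2.2.1
    have he := Real.exp_nonneg (t*L)
    gcongr
  · filter_upwards [eventually_ge_atTop T] with t ht
    have ht0 : 0 < t := lt_of_lt_of_le hT0 ht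
    have hb := (hFspec t ht).2.2.2
    have he := Real.exp_nonneg (t*L)
    gcongr
end
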